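/- Let v be a real symmetric m×m matrix with eigenvalues λ₁,…,λ_m and let α ∈ ℝ. Then exp(α ∫₀¹ tr((I_m - 2tiv)^{-1}(2iv)) dt) = ∏_{j=1}^m exp(-α Log(1 - 2iλ_j)), i.e. the semi-explicit exponential formula equals the product of principal-branch powers (1 - 2iλ_j)^{-α}. -/

import Mathlib

open Complex Matrix MeasureTheory


-- scalar integral lemma
lemma scalar_int (l : ℝ) :
    ∫ t in (0:ℝ)..1, (1 - 2*(t:ℂ)*Complex.I*(l:ℂ))⁻¹ * (2*Complex.I*(l:ℂ)) =
      -Complex.log (1 - 2*Complex.I*(l:ℂ)) := by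
  have hne : ∀ t : ℝ, (1 - 2*(t:ℂ)*Complex.I*(l:ℂ)) ≠ 0 := by
    intro t h
    apply_fun Complex.re at h
    simp [Complex.mul_re, Complex.mul_im] at h
  have hderiv : ∀ t ∈ Set.uIcc (0:ℝ) 1,
      HasDerivAt (fun t : ℝ => -Complex.log (1 - 2*(t:ℂ)*Complex.I*(l:ℂ)))
        ((1 - 2*(t:ℂ)*Complex.I*(l:ℂ))⁻¹ * (2*Complex.I*(l:ℂ))) t := by
    intro t _
    have h1 : HasDerivAt (fun t : ℝ => 1 - 2*(t:ℂ)*Complex.I*(l:ℂ)) (-(2*Complex.I*(l:ℂ))) t := by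
      have h2 : HasDerivAt (fun t : ℝ => ((t:ℂ))) 1 t := Complex.ofRealCLM.hasDerivAt
      have h3 := ((h2.const_mul (2:ℂ)).mul_const Complex.I).mul_const (l:ℂ)
      have h4 := (hasDerivAt_const t (1:ℂ)).sub h3
      convert h4 using 1; rfl; rfl; ring
    have h5 : (1 - 2*(t:ℂ)*Complex.I*(l:ℂ)) ∈ Complex.slitPlane := by
      rw [Complex.mem_slitPlane_iff]
      left
      simp [Complex.mul_re, Complex.mul_im]
    have := (h1.clog_real h5).neg
    convert this using 1
    rfl; rfl; ring
  rw [intervalIntegral.integral_eq_sub_of_hasDerivAt hderiv]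
  · simp
  · apply Continuous.intervalIntegrable
    exact ((Continuous.sub continuous_const (by continuity)).inv₀ hne).mul continuous_const


lemma key_trace (m : ℕ) (v : Matrix (Fin m) (Fin m) ℝ) (hv : v.IsHermitian) :
    ∀ t : ℝ, (((1 : Matrix (Fin m) (Fin m) ℂ) - (2 * t : ℂ) • Complex.I • v.map Complex.ofReal)⁻¹ *
          ((2 : ℂ) • Complex.I • v.map Complex.ofReal)).trace =
      ∑ j, (1 - 2*(t:ℂ)*Complex.I*(hv.eigenvalues j : ℂ))⁻¹ * (2*Complex.I*(hv.eigenvalues j : ℂ)) := by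
  intro t
  set U : Matrix (Fin m) (Fin m) ℝ := (hv.eigenvectorUnitary : Matrix (Fin m) (Fin m) ℝ) with hU
  set W : Matrix (Fin m) (Fin m) ℂ := U.map Complex.ofReal with hWdef
  have hU1 : U * star U = 1 := (Matrix.mem_unitaryGroup_iff).mp (hv.eigenvectorUnitary).2
  have hU2 : star U * U = 1 := (Matrix.mem_unitaryGroup_iff').mp (hv.eigenvectorUnitary).2
  have hstar : star W = (star U).map Complex.ofReal := by
    simp only [star_eq_conjTranspose]
    rw [Matrix.conjTranspose_map]
    intro a; simp
  have hmap : ∀ X Y : Matrix (Fin m) (Fin m) ℝ, (X * Y).map Complex.ofReal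
      = X.map Complex.ofReal * Y.map Complex.ofReal := fun X Y =>
    Matrix.map_mul (f := Complex.ofRealHom)
  have h1 : W * star W = 1 := by
    rw [hstar, ← hmap, hU1]; simp [Matrix.map_one]
  have h2 : star W * W = 1 := by
    rw [hstar, ← hmap, hU2]; simp [Matrix.map_one]
  set D : Matrix (Fin m) (Fin m) ℂ := diagonal (fun j => (hv.eigenvalues j : ℂ)) with hD
  have hA : v.map Complex.ofReal = W * D * star W := by
    conv_lhs => rw [hv.spectral_theorem]
    rw [Unitary.conjStarAlgAut_apply, hmap, hmap, hstar]
    congr 1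
    congr 1
    simp [hD, Matrix.diagonal_map]
  set d : Fin m → ℂ := fun j => 1 - 2*(t:ℂ)*Complex.I*(hv.eigenvalues j : ℂ) with hd
  have hdiagsub : (1 : Matrix (Fin m) (Fin m) ℂ) - (2 * t : ℂ) • Complex.I • D = diagonal d := by
    ext i j
    rcases eq_or_ne i j with h | h
    · subst h; simp [hd, hD, smul_eq_mul]; ring
    · simp [hd, hD, Matrix.diagonal_apply_ne _ h, Matrix.one_apply_ne h]
  have hne : ∀ j, d j ≠ 0 := by
    intro j h
    apply_fun Complex.re at h
    simp [hd, Complex.mul_re, Complex.mul_im] at h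
  have hDt : (diagonal d) * (diagonal fun j => (d j)⁻¹) = 1 := by
    have he : (fun j => d j * (d j)⁻¹) = fun _ => (1:ℂ) := funext fun j => mul_inv_cancel₀ (hne j)
    rw [Matrix.diagonal_mul_diagonal, he, Matrix.diagonal_one]
  have hsmul : ∀ (c : ℂ), c • Complex.I • (v.map Complex.ofReal) = W * (c • Complex.I • D) * star W := by
    intro c
    rw [hA, Matrix.mul_smul, Matrix.smul_mul, Matrix.mul_smul, Matrix.smul_mul]
  have hfact : (1 : Matrix (Fin m) (Fin m) ℂ) - (2 * t : ℂ) • Complex.I • v.map Complex.ofReal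
      = W * diagonal d * star W := by
    rw [hsmul, ← hdiagsub]
    rw [Matrix.mul_sub, Matrix.sub_mul, Matrix.mul_one, h1]
  have hinv : (W * diagonal d * star W)⁻¹ = W * (diagonal fun j => (d j)⁻¹) * star W := by
    apply Matrix.inv_eq_right_inv
    calc W * diagonal d * star W * (W * (diagonal fun j => (d j)⁻¹) * star W)
        = W * diagonal d * (star W * W) * (diagonal fun j => (d j)⁻¹) * star W := by
          simp only [Matrix.mul_assoc]
      _ = 1 := by rw [h2, Matrix.mul_one, Matrix.mul_assoc, Matrix.mul_assoc,
            ← Matrix.mul_assoc (diagonal d), hDt, Matrix.one_mul, h1]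
  have hprod : ∀ X Y : Matrix (Fin m) (Fin m) ℂ,
      (W * X * star W) * (W * Y * star W) = W * (X * Y) * star W := by
    intro X Y
    simp only [Matrix.mul_assoc]
    rw [← Matrix.mul_assoc (star W) W, h2, Matrix.one_mul]
  rw [hfact, hinv, hsmul, hprod]
  rw [Matrix.trace_mul_cycle, ← Matrix.mul_assoc, h2, Matrix.one_mul]
  have h2D : (2:ℂ) • Complex.I • D = diagonal (fun j => 2*Complex.I*(hv.eigenvalues j : ℂ)) := by
    rw [hD, smul_smul, ← Matrix.diagonal_smul]
    congr 1
  rw [h2D, Matrix.diagonal_mul_diagonal, Matrix.trace_diagonal]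

theorem stmt_16 (m : ℕ) (v : Matrix (Fin m) (Fin m) ℝ) (hv : v.IsHermitian) (α : ℝ) :
    Complex.exp ((α : ℂ) * ∫ t in (0:ℝ)..1,
        (((1 : Matrix (Fin m) (Fin m) ℂ) - (2 * t : ℂ) • Complex.I • v.map Complex.ofReal)⁻¹ *
          ((2 : ℂ) • Complex.I • v.map Complex.ofReal)).trace) =
      ∏ j, Complex.exp (-(α : ℂ) * Complex.log (1 - 2 * Complex.I * (hv.eigenvalues j : ℂ))) := by
  have hint : (∫ t in (0:ℝ)..1,
      (((1 : Matrix (Fin m) (Fin m) ℂ) - (2 * t : ℂ) • Complex.I • v.map Complex.ofReal)⁻¹ *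
        ((2 : ℂ) • Complex.I • v.map Complex.ofReal)).trace)
      = ∑ j, -Complex.log (1 - 2 * Complex.I * (hv.eigenvalues j : ℂ)) := by
    rw [intervalIntegral.integral_congr (g := fun t : ℝ => ∑ j,
        (1 - 2*(t:ℂ)*Complex.I*(hv.eigenvalues j : ℂ))⁻¹ * (2*Complex.I*(hv.eigenvalues j : ℂ)))
        (fun t _ => key_trace m v hv t)]
    rw [intervalIntegral.integral_finset_sum]
    · exact Finset.sum_congr rfl fun j _ => scalar_int _
    · intro j _
      apply Continuous.intervalIntegrable
      have hne : ∀ t : ℝ, (1 - 2*(t:ℂ)*Complex.I*(hv.eigenvalues j : ℂ)) ≠ 0 := by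
        intro t h
        apply_fun Complex.re at h
        simp [Complex.mul_re, Complex.mul_im] at h
      exact ((continuous_const.sub (((continuous_const.mul Complex.continuous_ofReal).mul
        continuous_const).mul continuous_const)).inv₀ hne).mul continuous_const
  rw [hint, Finset.mul_sum, Complex.exp_sum]
  refine Finset.prod_congr rfl fun j _ => ?_
  congr 1
  ring
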